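/- The number of unordered pairs of non-crossing diagonals of a convex n-gon equals (1/3) · C(n-3,2) · C(n+1,2), i.e., S = (n-3)(n-4)(n+1)n/12. -/

import Mathlib

open scoped Classical

/-- Diagonals of a convex `n`-gon with vertices `1,…,n`, encoded as pairs `(k,l)` with
`k < l`, `l - k ≥ 2`, and `(k,l) ≠ (1,n)`. -/
def diags (n : ℕ) : Finset (ℕ × ℕ) :=
  ((Finset.Icc 1 n) ×ˢ (Finset.Icc 1 n)).filter
    (fun p => p.1 < p.2 ∧ 2 ≤ p.2 - p.1 ∧ ¬(p.1 = 1 ∧ p.2 = n))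

/-- Two diagonals of a convex polygon cross (their interiors intersect) iff their
endpoints interlace around the polygon. -/
def cross (d e : ℕ × ℕ) : Prop :=
  (d.1 < e.1 ∧ e.1 < d.2 ∧ d.2 < e.2) ∨ (e.1 < d.1 ∧ d.1 < e.2 ∧ e.2 < d.2)

/-!
A convex `n`-gon has `D = C(n,2) - n` diagonals (all chords except the `n` sides), hence
`C(D,2)` unordered pairs of diagonals. A crossing pair is determined by its four endpoints
`a < b < c < d` (it must be `{ac, bd}`), and every 4-subset of the vertices arises, so there are
`C(n,4)` crossing pairs. The count `C(D,2) - C(n,4)` simplifies to `(n-3)(n-4)(n+1)n/12`.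
-/

open Finset

theorem card_product_filter_lexLt {α β : Type*} [LinearOrder α] [LinearOrder β]
    (s : Finset (α × β)) :
    #{x ∈ s ×ˢ s | x.1.1 < x.2.1 ∨ (x.1.1 = x.2.1 ∧ x.1.2 < x.2.2)} = (#s).choose 2 := by
  rw [← card_map toLex.toEmbedding (s := s), ← card_product_filter_lt]
  exact card_equiv (Equiv.prodCongr toLex toLex) (by simp [Prod.Lex.lt_iff])

theorem diags_eq_sdiff (n : ℕ) :
    diags n = {x ∈ Icc 1 n ×ˢ Icc 1 n | x.1 < x.2} \
      insert (1, n) ((Ico 1 n).image fun k => (k, k + 1)) := by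
  ext ⟨a, b⟩
  simp only [diags, mem_sdiff, mem_filter, mem_product, mem_Icc, mem_insert, mem_image,
    mem_Ico, Prod.mk.injEq, not_or, not_exists, not_and]
  constructor
  · rintro ⟨h, hlt, hgap, hside⟩
    exact ⟨⟨h, hlt⟩, hside, fun k _ hk => by omega⟩
  · rintro ⟨⟨h, hlt⟩, hside, hgap⟩
    exact ⟨h, hlt, by_contra fun h' => hgap a (by omega) rfl (by omega), hside⟩

theorem card_diags (n : ℕ) (hn : 3 ≤ n) : #(diags n) = n.choose 2 - n := by
  have hsides : #(insert (1, n) ((Ico 1 n).image fun k => (k, k + 1))) = n := by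
    rw [card_insert_of_notMem (by simp; omega),
      card_image_of_injective _ fun a b h => (Prod.mk.inj h).1, Nat.card_Ico]
    omega
  rw [diags_eq_sdiff, card_sdiff_of_subset, hsides, card_product_filter_lt, Nat.card_Icc,
    Nat.add_sub_cancel]
  · intro x
    simp only [mem_insert, mem_image, mem_Ico, mem_filter, mem_product, mem_Icc]
    rintro (rfl | ⟨k, hk, rfl⟩) <;> omega

theorem sort_insert_four {α : Type*} [LinearOrder α] {a b c d : α}
    (h : a < b ∧ b < c ∧ c < d) : ({a, b, c, d} : Finset α).sort = [a, b, c, d] := by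
  obtain ⟨hab, hbc, hcd⟩ := h
  have hl : [a, b, c, d].Pairwise (· < ·) := by
    simp [hab, hbc, hcd, hab.trans hbc, hbc.trans hcd, (hab.trans hbc).trans hcd]
  simpa using (List.toFinset_sort _ (hl.imp ne_of_lt)).mpr (hl.imp le_of_lt)

theorem exists_eq_insert_four_of_card_eq_four {α : Type*} [LinearOrder α] {s : Finset α}
    (hs : #s = 4) : ∃ a b c d, (a < b ∧ b < c ∧ c < d) ∧ s = {a, b, c, d} := by
  obtain ⟨a, b, c, d, hl⟩ := List.length_eq_four.mp (show s.sort.length = 4 by simp [hs])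
  have hsorted := (sortedLT_sort s).pairwise
  have hs' := sort_toFinset (s := s) (r := (· ≤ ·))
  rw [hl] at hsorted hs'
  simp only [List.pairwise_cons, List.mem_cons, List.not_mem_nil] at hsorted
  exact ⟨a, b, c, d, ⟨hsorted.1 b (by simp), hsorted.2.1 c (by simp), hsorted.2.2.1 d (by simp)⟩,
    by simpa using hs'.symm⟩

theorem mem_crossingPairs {n : ℕ} {p : (ℕ × ℕ) × (ℕ × ℕ)} :
    p ∈ {p ∈ diags n ×ˢ diags n | (p.1.1 < p.2.1 ∨ (p.1.1 = p.2.1 ∧ p.1.2 < p.2.2)) ∧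
      cross p.1 p.2} ↔
    1 ≤ p.1.1 ∧ p.1.1 < p.2.1 ∧ p.2.1 < p.1.2 ∧ p.1.2 < p.2.2 ∧ p.2.2 ≤ n := by
  rw [mem_filter]
  simp only [mem_product, diags, mem_filter, mem_Icc, cross]
  omega

theorem card_crossingPairs (n : ℕ) :
    #{p ∈ diags n ×ˢ diags n | (p.1.1 < p.2.1 ∨ (p.1.1 = p.2.1 ∧ p.1.2 < p.2.2)) ∧
      cross p.1 p.2} = n.choose 4 := by
  rw [show n.choose 4 = #((Icc 1 n).powersetCard 4) by simp]
  refine card_bij (fun p _ => {p.1.1, p.2.1, p.1.2, p.2.2}) ?_ ?_ ?_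
  · rintro ⟨⟨a, c⟩, b, d⟩ hp
    rw [mem_crossingPairs] at hp
    dsimp only at hp ⊢
    refine mem_powersetCard.mpr ⟨fun x hx => ?_, ?_⟩
    · simp only [mem_insert, mem_singleton] at hx
      rw [mem_Icc]
      omega
    · rw [← length_sort (· ≤ ·), sort_insert_four (by omega)]; rfl
  · rintro ⟨⟨a, c⟩, b, d⟩ hp ⟨⟨a', c'⟩, b', d'⟩ hq h
    rw [mem_crossingPairs] at hp hq
    have := congrArg Finset.sort h
    rw [sort_insert_four (by omega), sort_insert_four (by omega)] at this
    simp_all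
  · intro s hs
    rw [mem_powersetCard] at hs
    obtain ⟨a, b, c, d, habcd, rfl⟩ := exists_eq_insert_four_of_card_eq_four hs.2
    have ha := hs.1 (by simp : a ∈ _)
    have hd := hs.1 (by simp : d ∈ _)
    rw [mem_Icc] at ha hd
    exact ⟨((a, c), (b, d)), mem_crossingPairs.mpr (by dsimp only; omega), rfl⟩

theorem eq_div_twelve_of_add_choose_four {n N : ℕ} (hn : 3 ≤ n)
    (h : N + n.choose 4 = (n.choose 2 - n).choose 2) :
    N = (n - 3) * (n - 4) * (n + 1) * n / 12 := by
  obtain rfl | ⟨m, rfl⟩ : n = 3 ∨ ∃ m, n = m + 4 := by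
    rcases hn.eq_or_lt with h | h
    · exact .inl h.symm
    · exact .inr ⟨n - 4, by omega⟩
  · simpa using h
  have hsides : m + 4 ≤ (m + 4).choose 2 := by
    rw [Nat.choose_two_right, Nat.le_div_iff_mul_le two_pos]
    exact Nat.mul_le_mul_left _ (by omega)
  rw [show m + 4 - 3 = m + 1 by omega, Nat.add_sub_cancel]
  refine (Nat.div_eq_of_eq_mul_left (by norm_num) ?_).symm
  have h4 : ((m + 4).choose 4 : ℚ) = (m + 4) * (m + 3) * (m + 2) * (m + 1) / 24 := by
    rw [Nat.cast_choose ℚ (by omega : 4 ≤ m + 4), Nat.add_sub_cancel]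
    simp [Nat.factorial_succ]
    field_simp
    ring
  qify at h ⊢
  rw [Nat.cast_choose_two, Nat.cast_sub hsides, Nat.cast_choose_two, h4] at h
  push_cast at h
  linear_combination -12 * h

/-- Unordered pairs are encoded as ordered pairs `(d,e)` with `d` lexicographically before `e`. -/
theorem stmt2 (n : ℕ) (hn : 3 ≤ n) :
    (((diags n) ×ˢ (diags n)).filter
      (fun p => (p.1.1 < p.2.1 ∨ (p.1.1 = p.2.1 ∧ p.1.2 < p.2.2)) ∧ ¬ cross p.1 p.2)).card
      = (n - 3) * (n - 4) * (n + 1) * n / 12 := by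
  refine eq_div_twelve_of_add_choose_four hn ?_
  rw [← card_crossingPairs, ← card_diags n hn, ← card_product_filter_lexLt, ← filter_filter,
    ← filter_filter, add_comm]
  exact card_filter_add_card_filter_not _
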